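/- With Leontief utilities, every distribution q that maximizes, over Δ^m, the Nash product at a profile P satisfies core fair share at P. -/
import Mathlib


/-- Leontief utility of an agent with peak `p` at distribution `q`:
the minimum of `q j / p j` over alternatives `j` with `p j > 0`. -/
noncomputable def leontief {m : ℕ} (p q : Fin m → ℝ) : ℝ :=
  sInf {x : ℝ | ∃ j, 0 < p j ∧ x = q j / p j}

/-- `q` satisfies core fair share at profile `P` (with Leontief utilities). -/
def CoreFairShare {m n : ℕ} (P : Fin n → Fin m → ℝ) (q : Fin m → ℝ) : Prop :=
  ¬ ∃ (N' : Finset (Fin n)) (q' : Fin m → ℝ), N'.Nonempty ∧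
      q' ∈ stdSimplex ℝ (Fin m) ∧
      ∀ q'' ∈ stdSimplex ℝ (Fin m),
        (∀ i ∈ N', leontief (P i) q ≤
          leontief (P i) (((N'.card : ℝ) / (n : ℝ)) • q' +
            (1 - (N'.card : ℝ) / (n : ℝ)) • q'')) ∧
        (∃ i ∈ N', leontief (P i) q <
          leontief (P i) (((N'.card : ℝ) / (n : ℝ)) • q' +
            (1 - (N'.card : ℝ) / (n : ℝ)) • q''))

/-- `q` satisfies weak core fair share at profile `P` (with Leontief utilities). -/
def WeakCoreFairShare {m n : ℕ} (P : Fin n → Fin m → ℝ) (q : Fin m → ℝ) : Prop :=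
  ¬ ∃ (N' : Finset (Fin n)) (q' : Fin m → ℝ), N'.Nonempty ∧
      q' ∈ stdSimplex ℝ (Fin m) ∧
      ∀ q'' ∈ stdSimplex ℝ (Fin m), ∀ i ∈ N',
        leontief (P i) q <
          leontief (P i) (((N'.card : ℝ) / (n : ℝ)) • q' +
            (1 - (N'.card : ℝ) / (n : ℝ)) • q'')

/-- `q` maximizes the Nash product of Leontief utilities at profile `P`. -/
def NashMax {m n : ℕ} (P : Fin n → Fin m → ℝ) (q : Fin m → ℝ) : Prop :=
  q ∈ stdSimplex ℝ (Fin m) ∧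
    ∀ q' ∈ stdSimplex ℝ (Fin m), ∏ i, leontief (P i) q' ≤ ∏ i, leontief (P i) q

open Finset

private lemma leoSet_finite {m : ℕ} (p q : Fin m → ℝ) :
    {x : ℝ | ∃ j, 0 < p j ∧ x = q j / p j}.Finite := by
  apply Set.Finite.subset (Set.finite_range (fun j => q j / p j))
  rintro x ⟨j, _, rfl⟩; exact ⟨j, rfl⟩

private lemma leontief_le' {m : ℕ} {p q : Fin m → ℝ} {j : Fin m} (hj : 0 < p j) :
    leontief p q ≤ q j / p j :=
  csInf_le (leoSet_finite p q).bddBelow ⟨j, hj, rfl⟩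

private lemma le_leontief' {m : ℕ} {p q : Fin m → ℝ} {c : ℝ} (hne : ∃ j, 0 < p j)
    (h : ∀ j, 0 < p j → c ≤ q j / p j) : c ≤ leontief p q := by
  obtain ⟨j, hj⟩ := hne
  exact le_csInf ⟨_, j, hj, rfl⟩ (by rintro x ⟨j', hj', rfl⟩; exact h j' hj')

private lemma leontief_attained' {m : ℕ} {p q : Fin m → ℝ} (hne : ∃ j, 0 < p j) :
    ∃ j, 0 < p j ∧ leontief p q = q j / p j := by
  obtain ⟨j, hj⟩ := hne
  have hmem : (q j / p j) ∈ {x : ℝ | ∃ j, 0 < p j ∧ x = q j / p j} := ⟨j, hj, rfl⟩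
  exact Set.Nonempty.csInf_mem ⟨_, hmem⟩ (leoSet_finite p q)

private lemma exists_pos' {m : ℕ} {p : Fin m → ℝ} (hp : p ∈ stdSimplex ℝ (Fin m)) :
    ∃ j, 0 < p j := by
  by_contra h
  push_neg at h
  have h2 : (∑ j, p j) ≤ 0 := Finset.sum_nonpos (fun j _ => h j)
  rw [hp.2] at h2; linarith

private lemma leontief_nonneg' {m : ℕ} {p q : Fin m → ℝ} (hne : ∃ j, 0 < p j)
    (hq : ∀ j, 0 ≤ q j) : 0 ≤ leontief p q :=
  le_leontief' hne (fun j hj => div_nonneg (hq j) hj.le)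

private lemma leontief_combo' {m : ℕ} {p x y : Fin m → ℝ} {s t : ℝ}
    (hs : 0 ≤ s) (ht : 0 ≤ t) (hne : ∃ j, 0 < p j) :
    s * leontief p x + t * leontief p y ≤ leontief p (s • x + t • y) := by
  apply le_leontief' hne
  intro j hj
  have h1 : leontief p x ≤ x j / p j := leontief_le' hj
  have h2 : leontief p y ≤ y j / p j := leontief_le' hj
  have e : (s • x + t • y) j = s * x j + t * y j := by simp
  rw [e, add_div, mul_div_assoc, mul_div_assoc]
  exact add_le_add (mul_le_mul_of_nonneg_left h1 hs) (mul_le_mul_of_nonneg_left h2 ht)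

private lemma prod_one_add_ge' {ι : Type*} (F : Finset ι) (x : ι → ℝ)
    (h : ∑ i ∈ F, |x i| ≤ 1) :
    1 + (∑ i ∈ F, x i) - (∑ i ∈ F, |x i|)^2 ≤ ∏ i ∈ F, (1 + x i) := by
  induction F using Finset.cons_induction with
  | empty => simp
  | cons a F ha IH =>
    rw [Finset.sum_cons] at h
    rw [Finset.sum_cons, Finset.sum_cons, Finset.prod_cons]
    have hB : 0 ≤ ∑ i ∈ F, |x i| := Finset.sum_nonneg (fun i _ => abs_nonneg _)
    have hB1 : ∑ i ∈ F, |x i| ≤ 1 := by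
      have := abs_nonneg (x a); linarith
    have hA : |∑ i ∈ F, x i| ≤ ∑ i ∈ F, |x i| := Finset.abs_sum_le_sum_abs _ _
    have hIH := IH hB1
    set A := ∑ i ∈ F, x i with hAdef
    set B := ∑ i ∈ F, |x i| with hBdef
    have hu : |x a| ≤ 1 := by linarith
    have h2 := abs_le.mp hA
    have h3 := abs_le.mp hu
    have h1 : (1 + x a) * (1 + A - B^2) ≤ (1 + x a) * ∏ i ∈ F, (1 + x i) :=
      mul_le_mul_of_nonneg_left hIH (by linarith)
    refine le_trans ?_ h1
    have p1 : 0 ≤ (|x a| - x a) * (B - A) :=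
      mul_nonneg (by linarith [le_abs_self (x a)]) (by linarith)
    have p2 : 0 ≤ (|x a| + x a) * (B + A) :=
      mul_nonneg (by linarith [neg_abs_le (x a)]) (by linarith)
    have p3 : 0 ≤ |x a| * (B - B^2) := mul_nonneg (abs_nonneg _) (by nlinarith)
    have p4 : 0 ≤ (|x a| - x a) * B^2 :=
      mul_nonneg (by linarith [le_abs_self (x a)]) (sq_nonneg _)
    nlinarith [p1, p2, p3, p4, sq_nonneg (x a), sq_abs (x a)]

set_option maxHeartbeats 2000000 in
/-- with Leontief utilities, every distribution maximizing the Nash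
product at a profile satisfies core fair share at that profile. -/
theorem nash_max_satisfies_cfs {m n : ℕ}
    (P : Fin n → Fin m → ℝ) (hP : ∀ i, P i ∈ stdSimplex ℝ (Fin m))
    (q : Fin m → ℝ) (hmax : NashMax P q) :
    CoreFairShare P q := by
  obtain ⟨hq, hopt⟩ := hmax
  rintro ⟨N', q', hne, hq', hblock⟩
  obtain ⟨i0, hi0⟩ := hne
  have hn : 0 < n := i0.pos
  have hnR : (0:ℝ) < n := by exact_mod_cast hn
  set r : ℝ := (N'.card : ℝ) / n with hr
  have hcardpos : 0 < N'.card := Finset.card_pos.mpr ⟨i0, hi0⟩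
  have hcardR : (0:ℝ) < N'.card := by exact_mod_cast hcardpos
  have hrpos : 0 < r := div_pos hcardR hnR
  have hcardle : N'.card ≤ n := by
    have := Finset.card_le_univ N'
    simpa using this
  have hr1 : r ≤ 1 := by
    rw [hr, div_le_one hnR]; exact_mod_cast hcardle
  -- m positive
  have hm : 0 < m := by
    rcases Nat.eq_zero_or_pos m with h | h
    · subst h
      have := hq.2
      simp at this
    · exact h
  have hpos : ∀ i : Fin n, ∃ j, 0 < P i j := fun i => exists_pos' (hP i)
  -- m = 1 case: the simplex is a single point
  rcases Nat.lt_or_ge m 2 with hm2 | hm2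
  · have hm1 : m = 1 := by omega
    subst hm1
    have hqq' : ∀ j, q' j = q j := by
      intro j
      have h1 : q' 0 = 1 := by have := hq'.2; simpa [Fin.sum_univ_one] using this
      have h2 : q 0 = 1 := by have := hq.2; simpa [Fin.sum_univ_one] using this
      have hj0 : j = 0 := Subsingleton.elim _ _
      rw [hj0, h1, h2]
    have hx : r • q' + (1 - r) • q = q := by
      funext j; simp [hqq' j]; ring
    obtain ⟨_, i1, hi1, hstrict⟩ := hblock q hq
    rw [hx] at hstrict
    exact lt_irrefl _ hstrict
  -- now m ≥ 2
  haveI : Nontrivial (Fin m) := Fin.nontrivial_iff_two_le.mpr hm2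
  -- positivity of utilities at q
  have hmR : (0:ℝ) < m := by exact_mod_cast hm
  have hU : (fun _ : Fin m => (m:ℝ)⁻¹) ∈ stdSimplex ℝ (Fin m) := by
    constructor
    · intro j; positivity
    · simp [Finset.card_univ]
      field_simp
  have hUle : ∀ i, (m:ℝ)⁻¹ ≤ leontief (P i) (fun _ => (m:ℝ)⁻¹) := by
    intro i
    apply le_leontief' (hpos i)
    intro j hj
    rw [le_div_iff₀ hj]
    have hple : P i j ≤ 1 := by
      have h := Finset.single_le_sum (f := P i) (fun k _ => (hP i).1 k) (Finset.mem_univ j)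
      rwa [(hP i).2] at h
    nlinarith [inv_pos.mpr hmR]
  have hprodpos : 0 < ∏ i, leontief (P i) q := by
    have h1 : (0:ℝ) < ∏ _i : Fin n, (m:ℝ)⁻¹ :=
      Finset.prod_pos (fun _ _ => by positivity)
    have h2 : ∏ _i : Fin n, (m:ℝ)⁻¹ ≤ ∏ i, leontief (P i) (fun _ => (m:ℝ)⁻¹) :=
      Finset.prod_le_prod (fun _ _ => by positivity) (fun i _ => hUle i)
    have h3 := hopt _ hU
    linarith
  have ha : ∀ i, 0 < leontief (P i) q := by
    intro i
    rcases (leontief_nonneg' (hpos i) (fun j => hq.1 j)).lt_or_eq with h | h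
    · exact h
    · exfalso
      have h0 : ∏ i, leontief (P i) q = 0 := Finset.prod_eq_zero (Finset.mem_univ i) h.symm
      rw [h0] at hprodpos; exact lt_irrefl _ hprodpos
  have hb0 : ∀ i, 0 ≤ leontief (P i) q' :=
    fun i => leontief_nonneg' (hpos i) (fun j => hq'.1 j)
  -- First-order condition at the Nash maximum
  have hFOC : ∑ i, leontief (P i) q' / leontief (P i) q ≤ n := by
    by_contra hcon
    push_neg at hcon
    set c : Fin n → ℝ := fun i => leontief (P i) q' / leontief (P i) q - 1 with hc
    have hs : 0 < ∑ i, c i := by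
      have e : ∑ i, c i = (∑ i, leontief (P i) q' / leontief (P i) q) - n := by
        rw [hc, Finset.sum_sub_distrib]
        simp [Finset.card_univ]
      rw [e]; linarith
    set C : ℝ := ∑ i, |c i| with hC
    have hC0 : 0 ≤ C := Finset.sum_nonneg fun i _ => abs_nonneg _
    set t : ℝ := min (1/(C+1)) ((∑ i, c i)/(C^2+1)) with ht
    have htpos : 0 < t := lt_min (by positivity) (by positivity)
    have ht1 : t ≤ 1 := le_trans (min_le_left _ _)
      (by rw [div_le_one (by positivity)]; linarith)
    have htC : t * C ≤ 1 := by
      have h := min_le_left (1/(C+1)) ((∑ i, c i)/(C^2+1))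
      calc t * C ≤ (1/(C+1)) * C := mul_le_mul_of_nonneg_right h hC0
        _ ≤ 1 := by rw [div_mul_eq_mul_div, div_le_one (by positivity)]; linarith
    set qt : Fin m → ℝ := (1 - t) • q + t • q' with hqt
    have hqtS : qt ∈ stdSimplex ℝ (Fin m) :=
      (convex_stdSimplex ℝ (Fin m)) hq hq' (by linarith) htpos.le (by ring)
    have hlow : ∀ i, leontief (P i) q * (1 + t * c i) ≤ leontief (P i) qt := by
      intro i
      have h1 := leontief_combo' (p := P i) (x := q) (y := q')
        (by linarith : (0:ℝ) ≤ 1 - t) htpos.le (hpos i)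
      have hane : leontief (P i) q ≠ 0 := (ha i).ne'
      have e2 : leontief (P i) q * c i = leontief (P i) q' - leontief (P i) q := by
        rw [hc]; field_simp
      have e : leontief (P i) q * (1 + t * c i)
          = (1 - t) * leontief (P i) q + t * leontief (P i) q' := by
        have e1 : leontief (P i) q * (1 + t * c i)
            = leontief (P i) q + t * (leontief (P i) q * c i) := by ring
        rw [e1, e2]; ring
      rw [e]; exact h1
    have hfac0 : ∀ i : Fin n, 0 ≤ 1 + t * c i := by
      intro i
      have h1 : |c i| ≤ C := Finset.single_le_sum (fun i _ => abs_nonneg (c i)) (Finset.mem_univ i)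
      have h2 : t * |c i| ≤ t * C := mul_le_mul_of_nonneg_left h1 htpos.le
      have h3 := neg_abs_le (c i)
      nlinarith
    have habs2 : ∑ i, |t * c i| = t * C := by
      rw [hC, Finset.mul_sum]
      exact Finset.sum_congr rfl fun i _ => by rw [abs_mul, abs_of_pos htpos]
    have hprodge : (1:ℝ) < ∏ i, (1 + t * c i) := by
      have hkey := prod_one_add_ge' Finset.univ (fun i => t * c i) (by rw [habs2]; exact htC)
      rw [habs2, ← Finset.mul_sum] at hkey
      have hlt : t * C^2 < ∑ i, c i := by
        have h1 : t ≤ (∑ i, c i)/(C^2+1) := min_le_right _ _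
        have h2 : t * C^2 ≤ (∑ i, c i)/(C^2+1) * C^2 :=
          mul_le_mul_of_nonneg_right h1 (by positivity)
        have h3 : (∑ i, c i)/(C^2+1) * C^2 < ∑ i, c i := by
          rw [div_mul_eq_mul_div, div_lt_iff₀ (by positivity)]
          nlinarith
        linarith
      calc (1:ℝ) < 1 + t * (∑ i, c i) - (t*C)^2 := by nlinarith
        _ ≤ ∏ i, (1 + t * c i) := hkey
    have h1 : ∏ i, (leontief (P i) q * (1 + t * c i)) ≤ ∏ i, leontief (P i) qt :=
      Finset.prod_le_prod (fun i _ => mul_nonneg (ha i).le (hfac0 i)) (fun i _ => hlow i)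
    have h2 : ∏ i, (leontief (P i) q * (1 + t * c i))
        = (∏ i, leontief (P i) q) * ∏ i, (1 + t * c i) := Finset.prod_mul_distrib
    have h3 := hopt qt hqtS
    nlinarith [hprodpos, hprodge]
  -- every coalition member's utility at q is at most r times its utility at q'
  have hA : ∀ i ∈ N', leontief (P i) q ≤ r * leontief (P i) q' := by
    intro i hi
    obtain ⟨j, hj, hjeq⟩ := leontief_attained' (p := P i) (q := q') (hpos i)
    obtain ⟨k, hk⟩ := exists_ne j
    have hq'' : (fun l : Fin m => if l = k then (1:ℝ) else 0) ∈ stdSimplex ℝ (Fin m) := by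
      constructor
      · intro l; dsimp only; split <;> norm_num
      · simp
    have hall := (hblock _ hq'').1 i hi
    have hxj : (r • q' + (1 - r) • (fun l : Fin m => if l = k then (1:ℝ) else 0)) j
        = r * q' j := by
      simp [if_neg hk.symm]
    have hle : leontief (P i)
        (r • q' + (1 - r) • (fun l : Fin m => if l = k then (1:ℝ) else 0))
        ≤ r * q' j / P i j := by
      have h := leontief_le'
        (q := r • q' + (1 - r) • (fun l : Fin m => if l = k then (1:ℝ) else 0)) hj
      rwa [hxj] at h
    rw [hjeq, ← mul_div_assoc]
    exact le_trans hall hle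
  -- squeeze: the FOC forces exact equalities
  have hterm : ∀ i ∈ N', 1/r ≤ leontief (P i) q' / leontief (P i) q := by
    intro i hi
    rw [div_le_div_iff₀ hrpos (ha i), one_mul]
    have := hA i hi
    linarith [mul_comm (leontief (P i) q') r]
  have hTge : (n:ℝ) ≤ ∑ i ∈ N', leontief (P i) q' / leontief (P i) q := by
    have e : (n:ℝ) = ∑ _i ∈ N', 1/r := by
      rw [Finset.sum_const, nsmul_eq_mul, hr, one_div_div]
      field_simp
    rw [e]
    exact Finset.sum_le_sum hterm
  have hsplit := Finset.sum_add_sum_compl N' (fun i => leontief (P i) q' / leontief (P i) q)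
  have hcomplnn : (0:ℝ) ≤ ∑ i ∈ N'ᶜ, leontief (P i) q' / leontief (P i) q :=
    Finset.sum_nonneg fun i _ => div_nonneg (hb0 i) (ha i).le
  have hcompl0 : ∀ i ∈ N'ᶜ, leontief (P i) q' / leontief (P i) q = 0 := by
    have hsum0 : ∑ i ∈ N'ᶜ, (leontief (P i) q' / leontief (P i) q) = 0 := by
      linarith
    exact (Finset.sum_eq_zero_iff_of_nonneg
      (fun i _ => div_nonneg (hb0 i) (ha i).le)).mp hsum0
  have hNeq : ∀ i ∈ N', leontief (P i) q = r * leontief (P i) q' := by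
    have hs2 : ∑ i ∈ N', (leontief (P i) q' / leontief (P i) q - 1/r) = 0 := by
      rw [Finset.sum_sub_distrib, Finset.sum_const, nsmul_eq_mul]
      have e : (N'.card : ℝ) * (1/r) = n := by
        rw [hr, one_div_div]; field_simp
      rw [e]
      linarith
    intro i hi
    have h0 := (Finset.sum_eq_zero_iff_of_nonneg
      (fun i hi => by linarith [hterm i hi])).mp hs2 i hi
    have h1 : leontief (P i) q' / leontief (P i) q = 1/r := by linarith
    rw [div_eq_div_iff (ha i).ne' hrpos.ne'] at h1
    linarith [h1]
  rcases eq_or_lt_of_le hcardle with hcase | hlt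
  · -- the coalition is everyone: contradict Pareto optimality
    have hr1' : r = 1 := by rw [hr, hcase]; field_simp
    have hNuniv : N' = Finset.univ := by
      apply Finset.eq_univ_of_card
      rw [hcase, Fintype.card_fin]
    obtain ⟨hall, i1, hi1, hstrict⟩ := hblock q hq
    have hx : r • q' + (1 - r) • q = q' := by
      funext l; simp [hr1']
    rw [hx] at hall hstrict
    have hsum : (n:ℝ) < ∑ i, leontief (P i) q' / leontief (P i) q := by
      have h1 : ∀ i ∈ Finset.univ, (1:ℝ) ≤ leontief (P i) q' / leontief (P i) q := by
        intro i _
        exact (one_le_div (ha i)).2 (hall i (by rw [hNuniv]; exact Finset.mem_univ i))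
      have h2 : (1:ℝ) < leontief (P i1) q' / leontief (P i1) q :=
        (one_lt_div (ha i1)).2 hstrict
      calc (n:ℝ) = ∑ _i : Fin n, (1:ℝ) := by simp
        _ < ∑ i, leontief (P i) q' / leontief (P i) q :=
          Finset.sum_lt_sum h1 ⟨i1, Finset.mem_univ i1, h2⟩
    linarith
  · -- proper coalition: some outsider has zero utility at q'
    obtain ⟨i', hi'⟩ : ∃ i', i' ∉ N' := by
      by_contra hcontra; push_neg at hcontra
      have hu : N' = Finset.univ := Finset.eq_univ_iff_forall.mpr hcontra
      rw [hu, Finset.card_univ, Fintype.card_fin] at hlt; omega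
    have hbi' : leontief (P i') q' = 0 := by
      have h := hcompl0 i' (Finset.mem_compl.mpr hi')
      rcases div_eq_zero_iff.mp h with h' | h'
      · exact h'
      · exact absurd h' (ha i').ne'
    obtain ⟨j0, hj0pos, hj0eq⟩ := leontief_attained' (p := P i') (q := q') (hpos i')
    have hq'j0 : q' j0 = 0 := by
      rw [hbi'] at hj0eq
      rcases div_eq_zero_iff.mp hj0eq.symm with h' | h'
      · exact h'
      · exact absurd h' hj0pos.ne'
    have hq2S : (fun l : Fin m => if l = j0 then (1:ℝ) else 0) ∈ stdSimplex ℝ (Fin m) := by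
      constructor
      · intro l; dsimp only; split <;> norm_num
      · simp
    obtain ⟨hall, i1, hi1, hstrict⟩ := hblock _ hq2S
    obtain ⟨j1, hj1pos, hj1eq⟩ := leontief_attained' (p := P i1) (q := q') (hpos i1)
    have hb1pos : 0 < leontief (P i1) q' := by
      rcases (hb0 i1).lt_or_eq with h | h
      · exact h
      · exfalso
        have h2 := hNeq i1 hi1
        rw [← h, mul_zero] at h2
        exact absurd h2 (ha i1).ne'
    have hj1ne : j1 ≠ j0 := by
      intro hE
      rw [hE, hq'j0, zero_div] at hj1eq
      linarith
    have hxj1 : (r • q' + (1 - r) • (fun l : Fin m => if l = j0 then (1:ℝ) else 0)) j1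
        = r * q' j1 := by
      simp [if_neg hj1ne]
    have hup : leontief (P i1)
        (r • q' + (1 - r) • (fun l : Fin m => if l = j0 then (1:ℝ) else 0))
        ≤ r * leontief (P i1) q' := by
      have h := leontief_le'
        (q := r • q' + (1 - r) • (fun l : Fin m => if l = j0 then (1:ℝ) else 0)) hj1pos
      rw [hxj1] at h
      rw [hj1eq, ← mul_div_assoc]
      exact h
    have := hNeq i1 hi1
    linarith
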